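/- Consider the massless (m = 0) rotating-BTZ pole-skipping momenta: at order 1, the pair k₁₁ = −i(1/√2 + 1), k₁₂ = −i(1/√2 − 1); at order 2, the quadruple −i√2, −i(√2 − 2), −i(√2 + 2), −i√2. Let E₁(k), E₁(k²) denote the elementary symmetric polynomials of degree 1, 2 of the order-1 pair, and E₂(k), E₂(k²), E₂(k³), E₂(k⁴) those of degree 1, 2, 3, 4 of the order-2 quadruple. Then E₁(k) = −√2·i, E₁(k²) = 1/2, E₂(k) = −4√2·i, E₂(k²) = −8, E₂(k³) = 0, E₂(k⁴) = −4, and these values satisfy the three constraints: 4 + E₁(k)² − 4·E₁(k²) = 0; 4·E₁(k)² + 8·E₁(k²) − E₂(k²) − 4 = 0; and E₂(k) − 4·E₁(k) = 0. -/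

import Mathlib

noncomputable section

open Complex

/-- `√2` as a complex number. -/
def sq2 : ℂ := (Real.sqrt 2 : ℂ)

/-- order-1 massless rotating-BTZ pole-skipping momenta -/
def k₁₁ : ℂ := -Complex.I * (1 / sq2 + 1)
def k₁₂ : ℂ := -Complex.I * (1 / sq2 - 1)

/-- order-2 massless rotating-BTZ pole-skipping momenta -/
def k₂₁ : ℂ := -Complex.I * sq2
def k₂₂ : ℂ := -Complex.I * (sq2 - 2)
def k₂₃ : ℂ := -Complex.I * (sq2 + 2)
def k₂₄ : ℂ := -Complex.I * sq2

/-- elementary symmetric polynomials of the order-1 pair -/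
def E₁k : ℂ := k₁₁ + k₁₂
def E₁k2 : ℂ := k₁₁ * k₁₂

/-- elementary symmetric polynomials of the order-2 quadruple -/
def E₂k : ℂ := k₂₁ + k₂₂ + k₂₃ + k₂₄
def E₂k2 : ℂ := k₂₁ * k₂₂ + k₂₁ * k₂₃ + k₂₁ * k₂₄ + k₂₂ * k₂₃ + k₂₂ * k₂₄ + k₂₃ * k₂₄
def E₂k3 : ℂ := k₂₁ * k₂₂ * k₂₃ + k₂₁ * k₂₂ * k₂₄ + k₂₁ * k₂₃ * k₂₄ + k₂₂ * k₂₃ * k₂₄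
def E₂k4 : ℂ := k₂₁ * k₂₂ * k₂₃ * k₂₄

/-! Every momentum is `-i` times a polynomial in `√2`, so an elementary symmetric polynomial of
degree `m` is `(-i)^m` times a polynomial in `√2`; these reduce with `√2 ^ 2 = 2` and `i ^ 2 = -1`,
after which the three constraints are arithmetic in the values. -/

theorem sq2_sq : sq2 ^ 2 = 2 := by
  rw [sq2, ← ofReal_pow, Real.sq_sqrt zero_le_two, ofReal_ofNat]

theorem sq2_inv : sq2⁻¹ = sq2 / 2 := by
  have hne : sq2 ≠ 0 := fun h => by simpa [h] using sq2_sq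
  rw [eq_div_iff two_ne_zero, inv_mul_eq_iff_eq_mul₀ hne, ← sq, sq2_sq]

theorem E₁k_eq : E₁k = -sq2 * I := by
  have h : E₁k = -I * (2 * sq2⁻¹) := by simp only [E₁k, k₁₁, k₁₂, one_div]; ring
  rw [h, sq2_inv]; ring

theorem E₁k2_eq : E₁k2 = 1 / 2 := by
  have h : E₁k2 = (-I) ^ 2 * (sq2⁻¹ ^ 2 - 1) := by simp only [E₁k2, k₁₁, k₁₂, one_div]; ring
  rw [h, neg_sq, I_sq, inv_pow, sq2_sq]; norm_num

theorem E₂k_eq : E₂k = -4 * sq2 * I := by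
  simp only [E₂k, k₂₁, k₂₂, k₂₃, k₂₄]; ring

theorem E₂k2_eq : E₂k2 = -8 := by
  have h : E₂k2 = (-I) ^ 2 * (6 * sq2 ^ 2 - 4) := by
    simp only [E₂k2, k₂₁, k₂₂, k₂₃, k₂₄]; ring
  rw [h, neg_sq, I_sq, sq2_sq]; norm_num

theorem E₂k3_eq : E₂k3 = 0 := by
  have h : E₂k3 = (-I) ^ 3 * sq2 * (4 * sq2 ^ 2 - 8) := by
    simp only [E₂k3, k₂₁, k₂₂, k₂₃, k₂₄]; ring
  rw [h, sq2_sq]; ring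

theorem E₂k4_eq : E₂k4 = -4 := by
  have h : E₂k4 = ((-I) ^ 2) ^ 2 * sq2 ^ 2 * (sq2 ^ 2 - 4) := by
    simp only [E₂k4, k₂₁, k₂₂, k₂₃, k₂₄]; ring
  rw [h, neg_sq, I_sq, sq2_sq]; norm_num

theorem E₁k_sq : E₁k ^ 2 = -2 := by
  rw [E₁k_eq, mul_pow, neg_sq, sq2_sq, I_sq]; norm_num

/-- explicit values of the massless rotating-BTZ pole-skipping symmetric
polynomials and the three constraints they satisfy. -/
theorem btz_pole_skipping_values_and_constraints :
    E₁k = -sq2 * Complex.I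
    ∧ E₁k2 = 1 / 2
    ∧ E₂k = -4 * sq2 * Complex.I
    ∧ E₂k2 = -8
    ∧ E₂k3 = 0
    ∧ E₂k4 = -4
    ∧ 4 + E₁k ^ 2 - 4 * E₁k2 = 0
    ∧ 4 * E₁k ^ 2 + 8 * E₁k2 - E₂k2 - 4 = 0
    ∧ E₂k - 4 * E₁k = 0 := by
  refine ⟨E₁k_eq, E₁k2_eq, E₂k_eq, E₂k2_eq, E₂k3_eq, E₂k4_eq, ?_, ?_, ?_⟩
  · rw [E₁k_sq, E₁k2_eq]; norm_num
  · rw [E₁k_sq, E₁k2_eq, E₂k2_eq]; norm_num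
  · rw [E₂k_eq, E₁k_eq]; ring

end
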